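/- arXiv:2008.10394 — 4 statements merged into one kernel-verified Lean document; each statement's English description precedes it below -/
import Mathlib

section
/- If K and K' are locally anti-blocking bodies in ℝⁿ, then K + K' is locally anti-blocking, and moreover (K + K') ∩ σℝ₊ⁿ = (K ∩ σℝ₊ⁿ) + (K' ∩ σℝ₊ⁿ) for every sign vector σ ∈ {−1,1}ⁿ. -/
open Set MeasureTheory Pointwise
open scoped RealInnerProductSpace

/-- A convex body `K ⊆ ℝ₊ⁿ` (compact, convex, containing `0`) is anti-blocking if
for all `y ∈ K` and `x ∈ ℝ₊ⁿ` with `x ≤ y` coordinatewise, `x ∈ K`. -/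
def IsAntiBlocking (n : ℕ) (K : Set (EuclideanSpace ℝ (Fin n))) : Prop :=
  IsCompact K ∧ Convex ℝ K ∧ (0 : EuclideanSpace ℝ (Fin n)) ∈ K ∧
    (∀ y ∈ K, ∀ i, (0:ℝ) ≤ y i) ∧
    ∀ y ∈ K, ∀ x : EuclideanSpace ℝ (Fin n),
      (∀ i, 0 ≤ x i) → (∀ i, x i ≤ y i) → x ∈ K

/-- Sign vector: each entry is `1` or `-1`. -/
def IsSignVector {n : ℕ} (σ : Fin n → ℝ) : Prop := ∀ i, σ i = 1 ∨ σ i = -1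

/-- The closed orthant `σℝ₊ⁿ = {x : σ i * x i ≥ 0 for all i}`. -/
def orthant {n : ℕ} (σ : Fin n → ℝ) : Set (EuclideanSpace ℝ (Fin n)) :=
  {x | ∀ i, 0 ≤ σ i * x i}

/-- Coordinatewise multiplication by the sign vector `σ`. -/
def sgnMul {n : ℕ} (σ : Fin n → ℝ) (x : EuclideanSpace ℝ (Fin n)) :
    EuclideanSpace ℝ (Fin n) :=
  WithLp.toLp 2 (fun i => σ i * x i)

/-- `K` is locally anti-blocking if `σ (K ∩ σℝ₊ⁿ)` is anti-blocking for every sign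
vector `σ ∈ {-1,1}ⁿ`. -/
def IsLocallyAntiBlocking (n : ℕ) (K : Set (EuclideanSpace ℝ (Fin n))) : Prop :=
  ∀ σ : Fin n → ℝ, IsSignVector σ →
    IsAntiBlocking n (sgnMul σ '' (K ∩ orthant σ))

/-!
Call `x'` a *shrinking* of `x` if every coordinate `x' i` lies between `0` and `x i`. A locally
anti-blocking body is closed under shrinking: flip the signs of `x` into the positive orthant and
use that the flipped piece is anti-blocking. A point `z = x + y` of `σℝ₊ⁿ` can be rewritten
coordinatewise as `z = x' + y'` with `x', y'` shrinkings of `x, y` that are also shrinkings of `z`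
(keep a summand, drop it if it has the wrong sign, or let the other one absorb all of `z i`).
Hence `x' ∈ K ∩ σℝ₊ⁿ` and `y' ∈ K' ∩ σℝ₊ⁿ`, which is the decomposition of `(K + K') ∩ σℝ₊ⁿ`.
Since `x ↦ σx` is additive, `σ((K + K') ∩ σℝ₊ⁿ)` is then a Minkowski sum of two anti-blocking
bodies, and anti-blocking bodies are closed under Minkowski sums.
-/

lemma exists_add_eq_mem_uIcc (a b : ℝ) :
    ∃ a' ∈ uIcc 0 a, ∃ b' ∈ uIcc 0 b,
      a' ∈ uIcc 0 (a + b) ∧ b' ∈ uIcc 0 (a + b) ∧ a' + b' = a + b := by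
  simp only [mem_uIcc]
  rcases le_total 0 a with ha | ha <;> rcases le_total 0 b with hb | hb
  · exact ⟨a, by grind, b, by grind, by grind, by grind, rfl⟩
  · rcases le_total 0 (a + b) with hab | hab
    · exact ⟨a + b, by grind, 0, by grind, by grind, by grind, by ring⟩
    · exact ⟨0, by grind, a + b, by grind, by grind, by grind, by ring⟩
  · rcases le_total 0 (a + b) with hab | hab
    · exact ⟨0, by grind, a + b, by grind, by grind, by grind, by ring⟩
    · exact ⟨a + b, by grind, 0, by grind, by grind, by grind, by ring⟩
  · exact ⟨a, by grind, b, by grind, by grind, by grind, rfl⟩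

lemma nonneg_mul_of_mem_uIcc {s z a : ℝ} (hz : 0 ≤ s * z) (ha : a ∈ uIcc 0 z) : 0 ≤ s * a := by
  rcases le_total 0 s with hs | hs <;> rcases mem_uIcc.1 ha with ⟨h0, hz'⟩ | ⟨hz', h0⟩ <;>
    nlinarith

section SignFlip

variable {n : ℕ} {σ : Fin n → ℝ}

lemma sgnMul_add (σ : Fin n → ℝ) (x y : EuclideanSpace ℝ (Fin n)) :
    sgnMul σ (x + y) = sgnMul σ x + sgnMul σ y := by
  ext i
  exact mul_add _ _ _

lemma image_sgnMul_add (σ : Fin n → ℝ) (A B : Set (EuclideanSpace ℝ (Fin n))) :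
    sgnMul σ '' (A + B) = sgnMul σ '' A + sgnMul σ '' B :=
  image_image2_distrib (sgnMul_add σ)

lemma IsSignVector.sgnMul_involutive (hσ : IsSignVector σ) : Function.Involutive (sgnMul σ) := by
  intro x
  ext i
  change σ i * (σ i * x i) = x i
  rcases hσ i with h | h <;> simp [h]

lemma add_subset_orthant (σ : Fin n → ℝ) : orthant σ + orthant σ ⊆ orthant σ := by
  rintro _ ⟨x, hx, y, hy, rfl⟩ i
  change 0 ≤ σ i * (x i + y i)
  rw [mul_add]
  exact add_nonneg (hx i) (hy i)

end SignFlip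

lemma IsAntiBlocking.add {n : ℕ} {A B : Set (EuclideanSpace ℝ (Fin n))}
    (hA : IsAntiBlocking n A) (hB : IsAntiBlocking n B) : IsAntiBlocking n (A + B) := by
  obtain ⟨hAc, hAv, hA0, hAnn, hAd⟩ := hA
  obtain ⟨hBc, hBv, hB0, hBnn, hBd⟩ := hB
  refine ⟨hAc.add hBc, hAv.add hBv, ⟨0, hA0, 0, hB0, add_zero 0⟩, ?_, ?_⟩
  · rintro _ ⟨a, ha, b, hb, rfl⟩ i
    exact add_nonneg (hAnn a ha i) (hBnn b hb i)
  · rintro _ ⟨a, ha, b, hb, rfl⟩ x hx0 hxab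
    let a' : EuclideanSpace ℝ (Fin n) := WithLp.toLp 2 fun i => min (x i) (a i)
    have ha' : a' ∈ A :=
      hAd a ha a' (fun i => le_min (hx0 i) (hAnn a ha i)) (fun i => min_le_right _ _)
    have hb' : x - a' ∈ B := by
      refine hBd b hb _ (fun i => sub_nonneg.2 (min_le_left _ _)) (fun i => ?_)
      change x i - min (x i) (a i) ≤ b i
      have : x i ≤ a i + b i := hxab i
      have := hBnn b hb i
      rcases le_total (x i) (a i) with h | h <;> simp only [min_eq_left, min_eq_right, h] <;>
        linarith
    exact ⟨a', ha', x - a', hb', add_sub_cancel a' x⟩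

namespace IsLocallyAntiBlocking

variable {n : ℕ} {K K' : Set (EuclideanSpace ℝ (Fin n))}

lemma mem_of_mem_uIcc (hK : IsLocallyAntiBlocking n K) {x x' : EuclideanSpace ℝ (Fin n)}
    (hx : x ∈ K) (hx' : ∀ i, x' i ∈ uIcc 0 (x i)) : x' ∈ K := by
  set τ : Fin n → ℝ := fun i => if 0 ≤ x i then 1 else -1
  have hτ : IsSignVector τ := fun i => by by_cases h : 0 ≤ x i <;> simp [τ, h]
  have hxτ : x ∈ orthant τ := fun i => by by_cases h : 0 ≤ x i <;> simp [τ, h]; linarith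
  have hx'τ (i : Fin n) : 0 ≤ τ i * x' i ∧ τ i * x' i ≤ τ i * x i := by
    have := mem_uIcc.1 (hx' i)
    by_cases h : 0 ≤ x i <;> simp only [τ, h, if_true, if_false] <;> grind
  obtain ⟨w, ⟨hwK, -⟩, hw⟩ := (hK τ hτ).2.2.2.2 _ (mem_image_of_mem _ ⟨hx, hxτ⟩) (sgnMul τ x')
    (fun i => (hx'τ i).1) (fun i => (hx'τ i).2)
  rwa [← hτ.sgnMul_involutive.injective hw]

lemma inter_orthant_add (hK : IsLocallyAntiBlocking n K) (hK' : IsLocallyAntiBlocking n K')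
    (σ : Fin n → ℝ) : (K + K') ∩ orthant σ = (K ∩ orthant σ) + (K' ∩ orthant σ) := by
  refine Subset.antisymm ?_ (subset_inter (add_subset_add inter_subset_left inter_subset_left)
    ((add_subset_add inter_subset_right inter_subset_right).trans (add_subset_orthant σ)))
  rintro _ ⟨⟨x, hx, y, hy, rfl⟩, hxy⟩
  choose a ha b hb haz hbz hab using fun i => exists_add_eq_mem_uIcc (x i) (y i)
  refine ⟨WithLp.toLp 2 a, ⟨hK.mem_of_mem_uIcc hx ha, fun i => ?_⟩,
    WithLp.toLp 2 b, ⟨hK'.mem_of_mem_uIcc hy hb, fun i => ?_⟩, ?_⟩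
  · exact nonneg_mul_of_mem_uIcc (hxy i) (haz i)
  · exact nonneg_mul_of_mem_uIcc (hxy i) (hbz i)
  · ext i
    exact hab i

end IsLocallyAntiBlocking

theorem locallyAntiBlocking_add {n : ℕ}
    {K K' : Set (EuclideanSpace ℝ (Fin n))}
    (hK : IsLocallyAntiBlocking n K) (hK' : IsLocallyAntiBlocking n K') :
    IsLocallyAntiBlocking n (K + K') ∧
      ∀ σ : Fin n → ℝ, IsSignVector σ →
        (K + K') ∩ orthant σ = (K ∩ orthant σ) + (K' ∩ orthant σ) := by
  refine ⟨fun σ hσ => ?_, fun σ _ => hK.inter_orthant_add hK' σ⟩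
  rw [hK.inter_orthant_add hK' σ, image_sgnMul_add]
  exact (hK σ hσ).add (hK' σ hσ)
end

section
/- The only anti-blocking bodies in ℝ₊ⁿ that have a center of symmetry are axes-parallel boxes: for an anti-blocking body K, there exists x with K − x = x − K if and only if K = [0,a₁] × ⋯ × [0,aₙ] for some a₁,…,aₙ ≥ 0. -/
open Set MeasureTheory Pointwise
open scoped RealInnerProductSpace

/-! Central symmetry about `x` means that the reflection `k ↦ 2x - k` maps `K` into itself.
Reflecting `0 ∈ K` puts the corner `2x` in `K`, so down-closure gives `[0, 2x] ⊆ K`, while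
`2x - k ∈ K` having nonnegative coordinates gives `K ⊆ [0, 2x]`. Conversely the box `[0, a]` is
symmetric about `a / 2`. -/

theorem image_sub_const_eq_image_const_sub_iff {G : Type*} [AddCommGroup G] {K : Set G} {x : G} :
    (fun k => k - x) '' K = (fun k => x - k) '' K ↔ ∀ k ∈ K, x + x - k ∈ K := by
  constructor
  · intro h k hk
    obtain ⟨k', hk', hk'_eq⟩ : k - x ∈ (fun k => x - k) '' K := h ▸ Set.mem_image_of_mem _ hk
    have : k' = x + x - k := by
      rw [← sub_sub_cancel x k', show x - k' = k - x from hk'_eq]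
      abel
    exact this ▸ hk'
  · intro h
    ext z
    constructor
    · rintro ⟨k, hk, rfl⟩
      exact ⟨x + x - k, h k hk, by dsimp only; abel⟩
    · rintro ⟨k, hk, rfl⟩
      exact ⟨x + x - k, h k hk, by dsimp only; abel⟩

theorem add_self_mem_of_add_self_sub_mem {G : Type*} [AddCommGroup G] {K : Set G} {x : G}
    (h0 : 0 ∈ K) (hreflect : ∀ k ∈ K, x + x - k ∈ K) : x + x ∈ K := by
  simpa using hreflect 0 h0

section Box

variable {ι : Type*}

theorem half_add_half_sub_mem_box {a : ι → ℝ} {z : EuclideanSpace ℝ ι}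
    (hz : ∀ i, 0 ≤ z i ∧ z i ≤ a i) (i : ι) :
    let c : EuclideanSpace ℝ ι := WithLp.toLp 2 (fun i => a i / 2)
    0 ≤ (c + c - z) i ∧ (c + c - z) i ≤ a i := by
  obtain ⟨hz₀, hza⟩ := hz i
  simp only [PiLp.sub_apply, PiLp.add_apply]
  constructor <;> linarith

theorem eq_box_of_add_self_sub_mem {K : Set (EuclideanSpace ℝ ι)} {x : EuclideanSpace ℝ ι}
    (h0 : 0 ∈ K) (hnonneg : ∀ y ∈ K, ∀ i, 0 ≤ y i)
    (hdown : ∀ y ∈ K, ∀ z : EuclideanSpace ℝ ι, (∀ i, 0 ≤ z i) → (∀ i, z i ≤ y i) → z ∈ K)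
    (hreflect : ∀ k ∈ K, x + x - k ∈ K) :
    K = {z | ∀ i, 0 ≤ z i ∧ z i ≤ (x + x) i} := by
  have hcorner := add_self_mem_of_add_self_sub_mem h0 hreflect
  ext z
  constructor
  · intro hz i
    have := hnonneg _ (hreflect z hz) i
    simp only [PiLp.sub_apply] at this
    exact ⟨hnonneg z hz i, by linarith⟩
  · intro hz
    exact hdown _ hcorner z (fun i => (hz i).1) (fun i => (hz i).2)

end Box

theorem antiBlocking_centrallySymmetric_iff_box {n : ℕ}
    {K : Set (EuclideanSpace ℝ (Fin n))} (hK : IsAntiBlocking n K) :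
    (∃ x : EuclideanSpace ℝ (Fin n),
        (fun k => k - x) '' K = (fun k => x - k) '' K) ↔
      ∃ a : Fin n → ℝ, (∀ i, 0 ≤ a i) ∧
        K = {z : EuclideanSpace ℝ (Fin n) | ∀ i, 0 ≤ z i ∧ z i ≤ a i} := by
  obtain ⟨-, -, h0, hnonneg, hdown⟩ := hK
  simp only [image_sub_const_eq_image_const_sub_iff]
  constructor
  · rintro ⟨x, hreflect⟩
    exact ⟨fun i => (x + x) i, hnonneg _ (add_self_mem_of_add_self_sub_mem h0 hreflect),
      eq_box_of_add_self_sub_mem h0 hnonneg hdown hreflect⟩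
  · rintro ⟨a, -, rfl⟩
    exact ⟨WithLp.toLp 2 (fun i => a i / 2), fun z hz => half_add_half_sub_mem_box hz⟩
end

section
/- Let K ⊆ ℝ₊ⁿ be a full-dimensional anti-blocking body, and suppose that for every j-dimensional coordinate subspace E (for some fixed 1 ≤ j < n), K = conv((K ∩ E) ∪ (K ∩ E⊥)). Then K is a simplex, i.e., every extreme point of K is a nonnegative multiple of a standard basis vector. -/
open Set MeasureTheory Pointwise
open scoped RealInnerProductSpace

/-- The coordinate subspace spanned by the standard basis vectors indexed by `S`. -/
def coordSubspace (n : ℕ) (S : Finset (Fin n)) : Set (EuclideanSpace ℝ (Fin n)) :=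
  {x | ∀ i ∉ S, x i = 0}

/-!
An extreme point of `conv (A ∪ B)` lies in `A ∪ B`. Hence an extreme point `p` of `K` lies in
`E` or in `E⊥` for every `j`-dimensional coordinate subspace `E`. Given two distinct coordinates
`i ≠ k`, choosing `E` to contain `e i` but not `e k` shows that `p i = 0` or `p k = 0`, so `p` has
at most one nonzero coordinate.
-/

theorem Finset.exists_card_eq_mem_notMem {α : Type*} [Fintype α] [DecidableEq α] {i k : α}
    (hik : i ≠ k) {j : ℕ} (hj1 : 1 ≤ j) (hjn : j < Fintype.card α) :
    ∃ S : Finset α, S.card = j ∧ i ∈ S ∧ k ∉ S := by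
  have hcard : j ≤ (Finset.univ.erase k).card := by
    rw [Finset.card_erase_of_mem (Finset.mem_univ k), Finset.card_univ]
    omega
  obtain ⟨S, hiS, hSk, hS⟩ := Finset.exists_subsuperset_card_eq
    (Finset.singleton_subset_iff.mpr (Finset.mem_erase.mpr ⟨hik, Finset.mem_univ i⟩))
    (by simpa using hj1) hcard
  exact ⟨S, hS, Finset.singleton_subset_iff.mp hiS, fun hk => by simpa using hSk hk⟩

theorem EuclideanSpace.exists_eq_smul_single_of_coord_eq_zero_or {ι : Type*} [Fintype ι]
    [DecidableEq ι] [Nonempty ι] {p : EuclideanSpace ℝ ι}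
    (h : ∀ i k, i ≠ k → p i = 0 ∨ p k = 0) :
    ∃ i, p = p i • EuclideanSpace.single i (1 : ℝ) := by
  by_cases hp : ∃ i, p i ≠ 0
  · obtain ⟨i, hi⟩ := hp
    refine ⟨i, ?_⟩
    ext k
    rcases eq_or_ne k i with rfl | hki
    · simp
    · simp [hki, (h i k hki.symm).resolve_left hi]
  · push Not at hp
    exact ⟨Classical.arbitrary ι, by ext k; simp [hp]⟩

theorem mem_union_of_mem_extremePoints_of_eq_convexHull {E : Type*} [AddCommGroup E]
    [Module ℝ E] {K A B : Set E} (hK : K = convexHull ℝ ((K ∩ A) ∪ (K ∩ B))) {p : E}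
    (hp : p ∈ K.extremePoints ℝ) : p ∈ A ∪ B := by
  rw [hK] at hp
  exact union_subset_union inter_subset_right inter_subset_right
    (extremePoints_convexHull_subset hp)

theorem antiBlocking_decomposes_implies_simplex_general {n j : ℕ}
    {K : Set (EuclideanSpace ℝ (Fin n))}
    (hK : IsAntiBlocking n K)
    (hj1 : 1 ≤ j) (hjn : j < n)
    (hdec : ∀ S : Finset (Fin n), S.card = j →
      K = convexHull ℝ ((K ∩ coordSubspace n S) ∪ (K ∩ coordSubspace n Sᶜ))) :
    ∀ p ∈ K.extremePoints ℝ, ∃ (i : Fin n) (μ : ℝ), 0 ≤ μ ∧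
      p = μ • (EuclideanSpace.single i (1:ℝ)) := by
  intro p hp
  have : Nonempty (Fin n) := ⟨⟨0, by omega⟩⟩
  have hsupp : ∀ i k, i ≠ k → p i = 0 ∨ p k = 0 := by
    intro i k hik
    obtain ⟨S, hS, hiS, hkS⟩ :=
      Finset.exists_card_eq_mem_notMem hik hj1 (by simpa using hjn)
    rcases mem_union_of_mem_extremePoints_of_eq_convexHull (hdec S hS) hp with hpS | hpSc
    · exact .inr (hpS k hkS)
    · exact .inl (hpSc i (Finset.notMem_compl.mpr hiS))
  obtain ⟨i, hi⟩ := EuclideanSpace.exists_eq_smul_single_of_coord_eq_zero_or hsupp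
  exact ⟨i, p i, hK.2.2.2.1 p hp.1 i, hi⟩

/-- If a full-dimensional anti-blocking body satisfies
`K = conv((K ∩ E) ∪ (K ∩ E⊥))` for all `j`-dimensional coordinate subspaces `E`
(for some fixed `1 ≤ j < n`), then `K` is a simplex: every extreme point of `K`
is a nonnegative multiple of a standard basis vector. -/
theorem antiBlocking_decomposes_implies_simplex {n j : ℕ}
    {K : Set (EuclideanSpace ℝ (Fin n))}
    (hK : IsAntiBlocking n K) (hfull : (interior K).Nonempty)
    (hj1 : 1 ≤ j) (hjn : j < n)
    (hdec : ∀ S : Finset (Fin n), S.card = j →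
      K = convexHull ℝ ((K ∩ coordSubspace n S) ∪ (K ∩ coordSubspace n Sᶜ))) :
    ∀ p ∈ K.extremePoints ℝ, ∃ (i : Fin n) (μ : ℝ), 0 ≤ μ ∧
      p = μ • (EuclideanSpace.single i (1:ℝ)) :=
  antiBlocking_decomposes_implies_simplex_general hK hj1 hjn hdec
end

section
/- For any two anti-blocking bodies K, T ⊆ ℝ₊ⁿ, Vol(K + T) ≤ Vol(K − T). -/
open Set MeasureTheory Pointwise
open scoped RealInnerProductSpace

/-!
Induction on the dimension, splitting off the first coordinate; write `K₀ = K ∩ {x₁ = 0}`.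

* On every line parallel to `e₁` the sections of `K + T₀` and `T + K₀` are intervals `[0, a]` and
  `[0, b]`, and the section of `K + T` lies in `[0, a + b]`; hence
  `vol (K + T) ≤ vol (K + T₀) + vol (T + K₀)`.
* The slices of `K ± T₀` by the hyperplanes `x₁ = s` are `Kₛ ± T₀`, so the induction hypothesis
  gives `vol (K + T₀) ≤ vol (K - T₀)`, and likewise `vol (T + K₀) ≤ vol (T - K₀)`.
* `K - T₀` lies in `{x₁ ≥ 0}` and `K₀ - T = -(T - K₀)` in `{x₁ ≤ 0}`, both inside `K - T`; hence
  `vol (K - T₀) + vol (T - K₀) ≤ vol (K - T)`.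
-/

structure IsOrthantLowerSet {α : Type*} [Preorder α] [Zero α] (K : Set α) : Prop where
  subset_Ici : K ⊆ Ici 0
  Icc_subset : ∀ y ∈ K, Icc 0 y ⊆ K

namespace IsOrthantLowerSet

variable {α β : Type*} [Preorder α] [Zero α] [Preorder β] [Zero β]

theorem image_orderIso {K : Set α} (hK : IsOrthantLowerSet K) (e : α ≃o β) (he : e 0 = 0) :
    IsOrthantLowerSet (e '' K) where
  subset_Ici := by
    rintro _ ⟨y, hy, rfl⟩
    rw [mem_Ici, ← he, e.le_iff_le]
    exact hK.subset_Ici hy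
  Icc_subset := by
    rintro _ ⟨y, hy, rfl⟩
    rw [← he, ← e.image_Icc]
    exact image_mono (hK.Icc_subset y hy)

theorem preimage_prodMk {K : Set (α × β)} (hK : IsOrthantLowerSet K) (s : α) :
    IsOrthantLowerSet (Prod.mk s ⁻¹' K) where
  subset_Ici _ hv := (hK.subset_Ici hv).2
  Icc_subset _ hv _ hu := hK.Icc_subset _ hv ⟨⟨(hK.subset_Ici hv).1, hu.1⟩, le_rfl, hu.2⟩

theorem zero_snd_mem {K : Set (α × β)} (hK : IsOrthantLowerSet K) {p : α × β} (hp : p ∈ K) :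
    (0, p.2) ∈ K :=
  hK.Icc_subset p hp ⟨⟨le_rfl, (hK.subset_Ici hp).2⟩, (hK.subset_Ici hp).1, le_rfl⟩

theorem exists_eq_Icc {F : Set ℝ} (hF : IsOrthantLowerSet F) (hFc : IsCompact F)
    (hne : F.Nonempty) : ∃ a, F = Icc 0 a :=
  ⟨sSup F, Subset.antisymm (fun _ ht => ⟨hF.subset_Ici ht, le_csSup hFc.bddAbove ht⟩)
    (hF.Icc_subset _ (hFc.sSup_mem hne))⟩

theorem volume_add_le {F G : Set ℝ} (hF : IsOrthantLowerSet F) (hFc : IsCompact F)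
    (hG : IsOrthantLowerSet G) (hGc : IsCompact G) :
    volume (F + G) ≤ volume F + volume G := by
  rcases F.eq_empty_or_nonempty with rfl | hFne
  · simp
  rcases G.eq_empty_or_nonempty with rfl | hGne
  · simp
  obtain ⟨a, rfl⟩ := hF.exists_eq_Icc hFc hFne
  obtain ⟨b, rfl⟩ := hG.exists_eq_Icc hGc hGne
  calc volume (Icc 0 a + Icc 0 b) ≤ volume (Icc (0 + 0) (a + b)) :=
        measure_mono (Icc_add_Icc_subset _ _ _ _)
    _ = ENNReal.ofReal (a + b) := by simp
    _ ≤ ENNReal.ofReal a + ENNReal.ofReal b := ENNReal.ofReal_add_le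
    _ = volume (Icc 0 a) + volume (Icc 0 b) := by simp

end IsOrthantLowerSet

theorem measure_add_le_measure_union_of_subset_Ici_of_subset_Iic {μ : Measure ℝ}
    [NullSingletonClass μ] {A B : Set ℝ} {c : ℝ} (hA : A ⊆ Ici c) (hB : B ⊆ Iic c) :
    μ A + μ B ≤ μ (A ∪ B) :=
  calc μ A + μ B = μ A + μ (B \ {c}) := by rw [measure_sdiff_null (measure_singleton c)]
    _ ≤ μ ((A ∪ B) ∩ Ici c) + μ ((A ∪ B) \ Ici c) := by
      refine add_le_add (measure_mono (subset_inter subset_union_left hA)) (measure_mono ?_)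
      rintro x ⟨hxB, hxc⟩
      exact ⟨Or.inr hxB, fun hx => hxc (le_antisymm (hB hxB) hx)⟩
    _ = μ (A ∪ B) := measure_inter_add_sdiff _ measurableSet_Ici

theorem IsCompact.sub {G : Type*} [TopologicalSpace G] [AddGroup G] [IsTopologicalAddGroup G]
    {s t : Set G} (hs : IsCompact s) (ht : IsCompact t) : IsCompact (s - t) := by
  rw [sub_eq_add_neg]
  exact hs.add ht.neg

section Slices

variable {X Y : Type*} [TopologicalSpace X] [TopologicalSpace Y] [T2Space X] [T2Space Y]
  {K : Set (X × Y)}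

theorem IsCompact.preimage_prodMk (hK : IsCompact K) (x : X) : IsCompact (Prod.mk x ⁻¹' K) :=
  (hK.image continuous_snd).of_isClosed_subset (hK.isClosed.preimage (Continuous.prodMk_right x))
    fun y hy => ⟨(x, y), hy, rfl⟩

theorem IsCompact.preimage_prodMk_left (hK : IsCompact K) (y : Y) :
    IsCompact ((fun x => (x, y)) ⁻¹' K) :=
  (hK.image continuous_fst).of_isClosed_subset (hK.isClosed.preimage (Continuous.prodMk_left y))
    fun x hx => ⟨(x, y), hx, rfl⟩

end Slices

section BottomFace

variable {E : Type*}

def bottomFace (K : Set (ℝ × E)) : Set (ℝ × E) := K ∩ Prod.fst ⁻¹' {0}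

theorem mem_bottomFace {K : Set (ℝ × E)} {p : ℝ × E} : p ∈ bottomFace K ↔ p ∈ K ∧ p.1 = 0 :=
  Iff.rfl

theorem bottomFace_subset (K : Set (ℝ × E)) : bottomFace K ⊆ K :=
  inter_subset_left

theorem IsCompact.bottomFace [TopologicalSpace E] {K : Set (ℝ × E)} (hK : IsCompact K) :
    IsCompact (bottomFace K) :=
  hK.inter_right (isClosed_singleton.preimage continuous_fst)

variable [AddCommGroup E]

theorem preimage_prodMk_add_bottomFace (K T : Set (ℝ × E)) (s : ℝ) :
    Prod.mk s ⁻¹' (K + bottomFace T) = Prod.mk s ⁻¹' K + Prod.mk 0 ⁻¹' T := by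
  ext u
  simp only [mem_preimage, mem_add, mem_bottomFace, Prod.exists, Prod.mk_add_mk, Prod.mk.injEq]
  grind

theorem preimage_prodMk_sub_bottomFace (K T : Set (ℝ × E)) (s : ℝ) :
    Prod.mk s ⁻¹' (K - bottomFace T) = Prod.mk s ⁻¹' K - Prod.mk 0 ⁻¹' T := by
  ext u
  simp only [mem_preimage, mem_sub, mem_bottomFace, Prod.exists, Prod.mk_sub_mk, Prod.mk.injEq]
  grind

theorem neg_preimage_prodMk_left_sub (K T : Set (ℝ × E)) (w : E) :
    -((fun s => (s, -w)) ⁻¹' (T - K)) = (fun s => (s, w)) ⁻¹' (K - T) := by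
  ext s
  rw [mem_neg, mem_preimage, mem_preimage, ← neg_sub, mem_neg, Prod.neg_mk, neg_neg, neg_neg]

variable [Preorder E] {K T : Set (ℝ × E)}

theorem IsOrthantLowerSet.preimage_prodMk_left_add_bottomFace (hK : IsOrthantLowerSet K)
    (T : Set (ℝ × E)) (w : E) : IsOrthantLowerSet ((fun s => (s, w)) ⁻¹' (K + bottomFace T)) where
  subset_Ici := by
    rintro s ⟨p, hp, q, ⟨-, hq⟩, hpq⟩
    have hs : p.1 + q.1 = s := congrArg Prod.fst hpq
    rw [hq, add_zero] at hs
    exact hs ▸ (hK.subset_Ici hp).1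
  Icc_subset := by
    rintro s ⟨p, hp, q, ⟨hqT, hq⟩, hpq⟩ t ht
    have hq : q.1 = 0 := hq
    have hs : p.1 + q.1 = s := congrArg Prod.fst hpq
    have hw : p.2 + q.2 = w := congrArg Prod.snd hpq
    rw [hq, add_zero] at hs
    refine ⟨(t, p.2), hK.Icc_subset p hp ⟨⟨ht.1, (hK.subset_Ici hp).2⟩, hs ▸ ht.2, le_rfl⟩,
      q, ⟨hqT, hq⟩, Prod.ext (by simp [hq]) hw⟩

theorem preimage_prodMk_left_add_subset (hK : IsOrthantLowerSet K) (hT : IsOrthantLowerSet T)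
    (w : E) : (fun s => (s, w)) ⁻¹' (K + T) ⊆
      (fun s => (s, w)) ⁻¹' (K + bottomFace T) + (fun s => (s, w)) ⁻¹' (T + bottomFace K) := by
  rintro s ⟨p, hp, q, hq, hpq⟩
  have hw : p.2 + q.2 = w := congrArg Prod.snd hpq
  refine ⟨p.1, ⟨p, hp, (0, q.2), ⟨hT.zero_snd_mem hq, rfl⟩, Prod.ext (add_zero _) hw⟩,
    q.1, ⟨q, hq, (0, p.2), ⟨hK.zero_snd_mem hp, rfl⟩, Prod.ext (add_zero _) ?_⟩,
    congrArg Prod.fst hpq⟩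
  show q.2 + p.2 = w
  rw [← hw, add_comm]

theorem preimage_prodMk_left_sub_bottomFace_subset_Ici (hK : IsOrthantLowerSet K)
    (T : Set (ℝ × E)) (w : E) : (fun s => (s, w)) ⁻¹' (K - bottomFace T) ⊆ Ici 0 := by
  rintro s ⟨p, hp, q, ⟨-, hq⟩, hpq⟩
  have hs : p.1 - q.1 = s := congrArg Prod.fst hpq
  rw [hq, sub_zero] at hs
  exact hs ▸ (hK.subset_Ici hp).1

end BottomFace

section Step

variable {n : ℕ} {K T : Set (ℝ × (Fin n → ℝ))}

theorem volume_add_le_volume_add_bottomFace_add (hK : IsOrthantLowerSet K) (hKc : IsCompact K)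
    (hT : IsOrthantLowerSet T) (hTc : IsCompact T) :
    volume (K + T) ≤ volume (K + bottomFace T) + volume (T + bottomFace K) := by
  have hKT₀ : IsCompact (K + bottomFace T) := hKc.add hTc.bottomFace
  have hTK₀ : IsCompact (T + bottomFace K) := hTc.add hKc.bottomFace
  rw [Measure.volume_eq_prod, Measure.prod_apply_symm (hKc.add hTc).measurableSet,
    Measure.prod_apply_symm hKT₀.measurableSet, Measure.prod_apply_symm hTK₀.measurableSet,
    ← lintegral_add_left (measurable_measure_prodMk_right hKT₀.measurableSet)]
  refine lintegral_mono fun w => ?_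
  exact (measure_mono (preimage_prodMk_left_add_subset hK hT w)).trans
    ((hK.preimage_prodMk_left_add_bottomFace T w).volume_add_le (hKT₀.preimage_prodMk_left w)
      (hT.preimage_prodMk_left_add_bottomFace K w) (hTK₀.preimage_prodMk_left w))

theorem volume_add_bottomFace_le_volume_sub_bottomFace
    (ih : ∀ A B : Set (Fin n → ℝ), IsOrthantLowerSet A → IsCompact A → IsOrthantLowerSet B →
      IsCompact B → volume (A + B) ≤ volume (A - B))
    (hK : IsOrthantLowerSet K) (hKc : IsCompact K) (hT : IsOrthantLowerSet T) (hTc : IsCompact T) :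
    volume (K + bottomFace T) ≤ volume (K - bottomFace T) := by
  rw [Measure.volume_eq_prod, Measure.prod_apply (hKc.add hTc.bottomFace).measurableSet,
    Measure.prod_apply (hKc.sub hTc.bottomFace).measurableSet]
  refine lintegral_mono fun s => ?_
  rw [preimage_prodMk_add_bottomFace, preimage_prodMk_sub_bottomFace]
  exact ih _ _ (hK.preimage_prodMk s) (hKc.preimage_prodMk s) (hT.preimage_prodMk 0)
    (hTc.preimage_prodMk 0)

theorem volume_sub_bottomFace_add_le_volume_sub (hK : IsOrthantLowerSet K) (hKc : IsCompact K)
    (hT : IsOrthantLowerSet T) (hTc : IsCompact T) :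
    volume (K - bottomFace T) + volume (T - bottomFace K) ≤ volume (K - T) := by
  have hKT₀ : IsCompact (K - bottomFace T) := hKc.sub hTc.bottomFace
  have hTK₀ : IsCompact (T - bottomFace K) := hTc.sub hKc.bottomFace
  -- `T - K₀` is reflected through the origin fiber by fiber: `w ↦ -w` here, `s ↦ -s` below.
  rw [Measure.volume_eq_prod, Measure.prod_apply_symm hKT₀.measurableSet,
    Measure.prod_apply_symm hTK₀.measurableSet, Measure.prod_apply_symm (hKc.sub hTc).measurableSet,
    ← lintegral_neg_eq_self fun w => volume ((fun s => (s, w)) ⁻¹' (T - bottomFace K)),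
    ← lintegral_add_left (measurable_measure_prodMk_right hKT₀.measurableSet)]
  refine lintegral_mono fun w => ?_
  have hneg : -((fun s => (s, -w)) ⁻¹' (T - bottomFace K)) ⊆ Iic 0 := by
    intro s hs
    simpa using preimage_prodMk_left_sub_bottomFace_subset_Ici hT K (-w) hs
  calc _ = volume ((fun s => (s, w)) ⁻¹' (K - bottomFace T))
        + volume (-((fun s => (s, -w)) ⁻¹' (T - bottomFace K))) := by rw [Measure.measure_neg]
    _ ≤ volume ((fun s => (s, w)) ⁻¹' (K - bottomFace T)
        ∪ -((fun s => (s, -w)) ⁻¹' (T - bottomFace K))) :=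
      measure_add_le_measure_union_of_subset_Ici_of_subset_Iic
        (preimage_prodMk_left_sub_bottomFace_subset_Ici hK T w) hneg
    _ ≤ volume ((fun s => (s, w)) ⁻¹' (K - T)) := by
      refine measure_mono (union_subset
        (preimage_mono (sub_subset_sub_left (bottomFace_subset T))) ?_)
      exact (neg_subset_neg.2 (preimage_mono (sub_subset_sub_left (bottomFace_subset K)))).trans
        (neg_preimage_prodMk_left_sub K T w).le

theorem volume_add_le_volume_sub_of_prod
    (ih : ∀ A B : Set (Fin n → ℝ), IsOrthantLowerSet A → IsCompact A → IsOrthantLowerSet B →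
      IsCompact B → volume (A + B) ≤ volume (A - B))
    (hK : IsOrthantLowerSet K) (hKc : IsCompact K) (hT : IsOrthantLowerSet T) (hTc : IsCompact T) :
    volume (K + T) ≤ volume (K - T) :=
  calc volume (K + T) ≤ volume (K + bottomFace T) + volume (T + bottomFace K) :=
        volume_add_le_volume_add_bottomFace_add hK hKc hT hTc
    _ ≤ volume (K - bottomFace T) + volume (T - bottomFace K) :=
        add_le_add (volume_add_bottomFace_le_volume_sub_bottomFace ih hK hKc hT hTc)
          (volume_add_bottomFace_le_volume_sub_bottomFace ih hT hTc hK hKc)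
    _ ≤ volume (K - T) := volume_sub_bottomFace_add_le_volume_sub hK hKc hT hTc

end Step

theorem measure_add_le_measure_sub_of_subsingleton {α : Type*} [AddGroup α] [Subsingleton α]
    [MeasurableSpace α] (μ : Measure α) (K T : Set α) : μ (K + T) ≤ μ (K - T) := by
  rcases (K + T).eq_empty_or_nonempty with h | ⟨_, a, ha, b, hb, -⟩
  · simp [h]
  · rw [Nonempty.eq_univ ⟨a - b, sub_mem_sub ha hb⟩]
    exact measure_mono (subset_univ _)

theorem measure_add_le_measure_sub_of_image {α β : Type*} [AddGroup α] [AddGroup β]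
    [MeasurableSpace α] [MeasurableSpace β] {μ : Measure α} {ν : Measure β} {e : α ≃ᵐ β}
    (he : MeasurePreserving e μ ν) (hadd : ∀ x y, e (x + y) = e x + e y) {K T : Set α}
    (h : ν (e '' K + e '' T) ≤ ν (e '' K - e '' T)) : μ (K + T) ≤ μ (K - T) := by
  have hmeas (S : Set α) : ν (e '' S) = μ S := by
    rw [e.image_eq_preimage_symm, (he.symm e).measure_preimage_equiv]
  have hsum : e '' (K + T) = e '' K + e '' T := image_add (AddMonoidHom.mk' e hadd)
  have hdiff : e '' (K - T) = e '' K - e '' T := image_sub (AddMonoidHom.mk' e hadd)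
  rwa [← hsum, ← hdiff, hmeas, hmeas] at h

theorem IsOrthantLowerSet.volume_add_le_volume_sub :
    ∀ {n : ℕ} {K T : Set (Fin n → ℝ)}, IsOrthantLowerSet K → IsCompact K →
      IsOrthantLowerSet T → IsCompact T → volume (K + T) ≤ volume (K - T)
  | 0, K, T, _, _, _, _ => measure_add_le_measure_sub_of_subsingleton _ K T
  | n + 1, K, T, hK, hKc, hT, hTc => by
    let e := MeasurableEquiv.piFinSuccAbove (fun _ : Fin (n + 1) => ℝ) 0
    have he : Continuous e := (continuous_apply 0).prodMk (continuous_pi fun j => continuous_apply _)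
    have he_order (S : Set (Fin (n + 1) → ℝ)) (hS : IsOrthantLowerSet S) :
        IsOrthantLowerSet (e '' S) :=
      hS.image_orderIso (Fin.insertNthOrderIso (fun _ => ℝ) 0).symm rfl
    refine measure_add_le_measure_sub_of_image (volume_preserving_piFinSuccAbove _ 0)
      (fun _ _ => rfl) ?_
    exact volume_add_le_volume_sub_of_prod (fun _ _ => volume_add_le_volume_sub)
      (he_order K hK) (hKc.image he) (he_order T hT) (hTc.image he)

theorem IsAntiBlocking.isOrthantLowerSet_image_ofLp {n : ℕ} {K : Set (EuclideanSpace ℝ (Fin n))}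
    (hK : IsAntiBlocking n K) : IsOrthantLowerSet (WithLp.ofLp '' K) where
  subset_Ici := by
    rintro _ ⟨y, hy, rfl⟩
    exact hK.2.2.2.1 y hy
  Icc_subset := by
    rintro _ ⟨y, hy, rfl⟩ x hx
    exact ⟨WithLp.toLp 2 x, hK.2.2.2.2 y hy _ hx.1 hx.2, rfl⟩

/-- For anti-blocking bodies `K, T ⊆ ℝ₊ⁿ`, `Vol(K + T) ≤ Vol(K - T)`. -/
theorem volume_add_le_volume_sub_antiBlocking {n : ℕ}
    {K T : Set (EuclideanSpace ℝ (Fin n))}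
    (hK : IsAntiBlocking n K) (hT : IsAntiBlocking n T) :
    volume (K + T) ≤ volume (K - T) := by
  refine measure_add_le_measure_sub_of_image
    (EuclideanSpace.volume_preserving_symm_measurableEquiv_toLp (Fin n)) (fun _ _ => rfl) ?_
  exact IsOrthantLowerSet.volume_add_le_volume_sub
    hK.isOrthantLowerSet_image_ofLp (hK.1.image (PiLp.continuous_ofLp 2 _))
    hT.isOrthantLowerSet_image_ofLp (hT.1.image (PiLp.continuous_ofLp 2 _))
end
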